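/- If w ∈ S_n satisfies w < s_i w and L(w) ⊄ L(s_i w), then w^{−1} and w^{−1} s_i have the same P-symbol: P(w^{−1}) = P(w^{−1} s_i). -/

import Mathlib

open Polynomial

noncomputable section

namespace KLPaper

open scoped Classical

/-! ### The symmetric group, simple transpositions, length and Bruhat order -/

/-- The simple transposition `sᵢ = (i, i+1)` (`0`-indexed) in the symmetric group on
`{0, …, n-1}`; junk value `1` if `i` is out of range. -/
def s (n i : ℕ) : Equiv.Perm (Fin n) :=
  if h : i + 1 < n then Equiv.swap ⟨i, Nat.lt_of_succ_lt h⟩ ⟨i + 1, h⟩ else 1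

/-- The Coxeter length of a permutation: the minimal length of an expression as a
product of adjacent transpositions. -/
def len (n : ℕ) (w : Equiv.Perm (Fin n)) : ℕ :=
  sInf { r | ∃ l : List ℕ, (∀ i ∈ l, i + 1 < n) ∧ l.length = r ∧ (l.map (s n)).prod = w }

/-- The Bruhat order on the symmetric group: `y ≤ w` iff there is a chain from `y` to `w`
each of whose steps multiplies by a transposition and increases the length. -/
def bruhatLE (n : ℕ) : Equiv.Perm (Fin n) → Equiv.Perm (Fin n) → Prop :=
  Relation.ReflTransGen
    (fun a b => (∃ t : Equiv.Perm (Fin n), t.IsSwap ∧ b = a * t) ∧ len n a < len n b)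

/-- Strict Bruhat order. -/
def bruhatLT (n : ℕ) (y w : Equiv.Perm (Fin n)) : Prop := bruhatLE n y w ∧ y ≠ w

/-- The left descent set `L(w) = {i : sᵢ w < w}` (recorded via indices `i`). -/
def LD (n : ℕ) (w : Equiv.Perm (Fin n)) : Set ℕ :=
  {i | i + 1 < n ∧ len n (s n i * w) < len n w}

/-- The right descent set `R(w) = {i : w sᵢ < w}` (recorded via indices `i`). -/
def RD (n : ℕ) (w : Equiv.Perm (Fin n)) : Set ℕ :=
  {i | i + 1 < n ∧ len n (w * s n i) < len n w}

/-! ### The Hecke algebra over ℚ(q^{1/2}) -/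

/-- The field `ℚ(v)` of rational functions; we regard `v = q^{1/2}`. -/
abbrev F : Type := RatFunc ℚ

/-- `v = q^{1/2}`. -/
def v : F := RatFunc.X

/-- The Hecke algebra parameter `q = v²`. -/
def qq : F := v ^ 2

/-- The defining relations of the Hecke algebra `H_n`:
`(Tᵢ - q)(Tᵢ + 1) = 0`, the braid relations, and commutation at distance `≥ 2`. -/
inductive HeckeRel (n : ℕ) :
    FreeAlgebra F {i : ℕ // i + 1 < n} → FreeAlgebra F {i : ℕ // i + 1 < n} → Prop
  | quad (i : {i : ℕ // i + 1 < n}) :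
      HeckeRel n (FreeAlgebra.ι F i * FreeAlgebra.ι F i)
        ((qq - 1) • FreeAlgebra.ι F i + algebraMap F _ qq)
  | braid (i j : {i : ℕ // i + 1 < n}) (h : (j : ℕ) = (i : ℕ) + 1) :
      HeckeRel n (FreeAlgebra.ι F i * FreeAlgebra.ι F j * FreeAlgebra.ι F i)
        (FreeAlgebra.ι F j * FreeAlgebra.ι F i * FreeAlgebra.ι F j)
  | comm (i j : {i : ℕ // i + 1 < n}) (h : (i : ℕ) + 2 ≤ (j : ℕ)) :
      HeckeRel n (FreeAlgebra.ι F i * FreeAlgebra.ι F j)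
        (FreeAlgebra.ι F j * FreeAlgebra.ι F i)

/-- The Hecke algebra `H_n` of the symmetric group `Sₙ` over `ℚ(q^{1/2})`. -/
abbrev Hecke (n : ℕ) := RingQuot (HeckeRel n)

/-- The generator `Tᵢ` of the Hecke algebra (junk value `1` if `i` out of range). -/
def T (n i : ℕ) : Hecke n :=
  if h : i + 1 < n then RingQuot.mkAlgHom F (HeckeRel n) (FreeAlgebra.ι F ⟨i, h⟩) else 1

/-- `l` is a word in the simple transpositions with product `w`. -/
def IsWordOf (n : ℕ) (w : Equiv.Perm (Fin n)) (l : List ℕ) : Prop :=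
  (∀ i ∈ l, i + 1 < n) ∧ (l.map (s n)).prod = w

/-- The standard basis element `T_w` of the Hecke algebra: the product `T_{i₁} ⋯ T_{i_r}`
over a reduced expression `w = s_{i₁} ⋯ s_{i_r}` (independent of the choice, by
Matsumoto's theorem). -/
def Tw (n : ℕ) (w : Equiv.Perm (Fin n)) : Hecke n :=
  if h : ∃ l : List ℕ, IsWordOf n w l ∧ l.length = len n w then
    ((Classical.choose h).map (T n)).prod
  else 0

/-! ### Kazhdan–Lusztig polynomials -/

/-- `C_w = Σ_{y ≤ w} (−1)^{l(w)−l(y)} q^{l(w)/2−l(y)} P_{y,w}(q^{−1}) T_y`,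
for a candidate family `P` of Kazhdan–Lusztig polynomials. -/
def Cw (n : ℕ) (P : Equiv.Perm (Fin n) → Equiv.Perm (Fin n) → Polynomial ℤ)
    (w : Equiv.Perm (Fin n)) : Hecke n :=
  ∑ y ∈ Finset.univ.filter (fun y => bruhatLE n y w),
    ((-1 : F) ^ (len n w - len n y) * (v ^ len n w / qq ^ len n y) *
      Polynomial.aeval qq⁻¹ (P y w)) • Tw n y

/-- `Σ_{y ≤ w} (−1)^{l(w)−l(y)} q^{−l(w)/2+l(y)} P_{y,w}(q) (T_{y⁻¹})⁻¹`: the image of `C_w`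
under the bar involution. -/
def CwBar (n : ℕ) (P : Equiv.Perm (Fin n) → Equiv.Perm (Fin n) → Polynomial ℤ)
    (w : Equiv.Perm (Fin n)) : Hecke n :=
  ∑ y ∈ Finset.univ.filter (fun y => bruhatLE n y w),
    ((-1 : F) ^ (len n w - len n y) * (qq ^ len n y / v ^ len n w) *
      Polynomial.aeval qq (P y w)) • Ring.inverse (Tw n y⁻¹)

/-- The defining conditions of the Kazhdan–Lusztig polynomials `P_{y,w}(q) ∈ ℤ[q]` (`y ≤ w`):
`P_{w,w} = 1`, `deg P_{y,w} ≤ (l(w)−l(y)−1)/2` for `y < w`, and the bar-invariance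
`C_w = Σ_{y≤w} (−1)^{l(w)−l(y)} q^{−l(w)/2+l(y)} P_{y,w}(q) (T_{y⁻¹})⁻¹`.
(By convention `P_{y,w} = 0` unless `y ≤ w`.) These conditions determine `P` uniquely. -/
structure IsKL (n : ℕ)
    (P : Equiv.Perm (Fin n) → Equiv.Perm (Fin n) → Polynomial ℤ) : Prop where
  not_le : ∀ y w, ¬ bruhatLE n y w → P y w = 0
  self : ∀ w, P w w = 1
  deg : ∀ y w, bruhatLT n y w → (P y w).degree ≤ ((len n w - len n y - 1) / 2 : ℕ)
  bar : ∀ w, Cw n P w = CwBar n P w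

/-- `μ(y,w)`: the coefficient of `q^{(l(w)−l(y)−1)/2}` in `P_{y,w}`, defined (possibly nonzero)
only when `(l(w)−l(y)−1)/2` is a nonnegative integer, i.e. `l(w) − l(y)` is odd. -/
def mu (n : ℕ) (P : Equiv.Perm (Fin n) → Equiv.Perm (Fin n) → Polynomial ℤ)
    (y w : Equiv.Perm (Fin n)) : ℤ :=
  if (len n w - len n y) % 2 = 1 then (P y w).coeff ((len n w - len n y - 1) / 2) else 0

/-- `μ(y|w) ≠ 0`:  `y < w` and `μ(y,w) ≠ 0`, or `y > w` and `μ(w,y) ≠ 0`. -/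
def muSym (n : ℕ) (P : Equiv.Perm (Fin n) → Equiv.Perm (Fin n) → Polynomial ℤ)
    (y w : Equiv.Perm (Fin n)) : Prop :=
  (bruhatLT n y w ∧ mu n P y w ≠ 0) ∨ (bruhatLT n w y ∧ mu n P w y ≠ 0)

/-! ### Cells -/

/-- `y ≤_L w`: there is a chain `y = x₁, …, x_r = w` with `L(x_k) ⊄ L(x_{k+1})` and
`μ(x_k|x_{k+1}) ≠ 0` for all `k`. -/
def leL (n : ℕ) (P : Equiv.Perm (Fin n) → Equiv.Perm (Fin n) → Polynomial ℤ) :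
    Equiv.Perm (Fin n) → Equiv.Perm (Fin n) → Prop :=
  Relation.ReflTransGen (fun a b => ¬ LD n a ⊆ LD n b ∧ muSym n P a b)

/-- `y ≤_R w`: there is a chain `y = x₁, …, x_r = w` with `R(x_k) ⊄ R(x_{k+1})` and
`μ(x_k|x_{k+1}) ≠ 0` for all `k`. -/
def leR (n : ℕ) (P : Equiv.Perm (Fin n) → Equiv.Perm (Fin n) → Polynomial ℤ) :
    Equiv.Perm (Fin n) → Equiv.Perm (Fin n) → Prop :=
  Relation.ReflTransGen (fun a b => ¬ RD n a ⊆ RD n b ∧ muSym n P a b)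

/-- `y ∼_L w`: `y` and `w` lie in the same left cell. -/
def simL (n : ℕ) (P : Equiv.Perm (Fin n) → Equiv.Perm (Fin n) → Polynomial ℤ)
    (y w : Equiv.Perm (Fin n)) : Prop :=
  leL n P y w ∧ leL n P w y

/-- `y ∼_R w`: `y` and `w` lie in the same right cell. -/
def simR (n : ℕ) (P : Equiv.Perm (Fin n) → Equiv.Perm (Fin n) → Polynomial ℤ)
    (y w : Equiv.Perm (Fin n)) : Prop :=
  leR n P y w ∧ leR n P w y

/-! ### The specialization q = 1 : the group algebra ℚSₙ -/

/-- `a(w) ∈ ℚSₙ`: the specialization of `C_w` at `q = 1`, namely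
`a(w) = Σ_{y ≤ w} (−1)^{l(w)−l(y)} P_{y,w}(1) · y`. -/
def aElt (n : ℕ) (P : Equiv.Perm (Fin n) → Equiv.Perm (Fin n) → Polynomial ℤ)
    (w : Equiv.Perm (Fin n)) : MonoidAlgebra ℚ (Equiv.Perm (Fin n)) :=
  ∑ y ∈ Finset.univ.filter (fun y => bruhatLE n y w),
    (((-1 : ℚ) ^ (len n w - len n y)) * (((P y w).eval 1 : ℤ) : ℚ)) •
      MonoidAlgebra.of ℚ (Equiv.Perm (Fin n)) y

/-- `V̄_w^L`: the smallest left ideal of `ℚSₙ` containing `a(w)` and spanned (over `ℚ`)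
by a subset of `{a(x)}`. -/
def Vbar (n : ℕ) (P : Equiv.Perm (Fin n) → Equiv.Perm (Fin n) → Polynomial ℤ)
    (w : Equiv.Perm (Fin n)) :
    Submodule (MonoidAlgebra ℚ (Equiv.Perm (Fin n))) (MonoidAlgebra ℚ (Equiv.Perm (Fin n))) :=
  sInf {I | aElt n P w ∈ I ∧ ∃ S : Set (Equiv.Perm (Fin n)),
    (I : Set (MonoidAlgebra ℚ (Equiv.Perm (Fin n)))) =
      (Submodule.span ℚ (aElt n P '' S) : Set (MonoidAlgebra ℚ (Equiv.Perm (Fin n))))}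

/-! ### Knuth moves and distinguished coset representatives -/

/-- `y` and `w` are in Knuth relation: for some position `j` (0-indexed), either
`y_{j+1} < y_j < y_{j+2}` and `w` is `y` with positions `j+1, j+2` exchanged, or
`y_{j+1} < y_{j+2} < y_j` and `w` is `y` with positions `j, j+1` exchanged. -/
def KnuthStep (n : ℕ) (y w : Equiv.Perm (Fin n)) : Prop :=
  ∃ (j : ℕ) (h2 : j + 2 < n),
    (y ⟨j + 1, Nat.lt_of_succ_lt h2⟩ < y ⟨j, Nat.lt_of_succ_lt (Nat.lt_of_succ_lt h2)⟩ ∧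
      y ⟨j, Nat.lt_of_succ_lt (Nat.lt_of_succ_lt h2)⟩ < y ⟨j + 2, h2⟩ ∧
      w = y * Equiv.swap ⟨j + 1, Nat.lt_of_succ_lt h2⟩ ⟨j + 2, h2⟩) ∨
    (y ⟨j + 1, Nat.lt_of_succ_lt h2⟩ < y ⟨j + 2, h2⟩ ∧
      y ⟨j + 2, h2⟩ < y ⟨j, Nat.lt_of_succ_lt (Nat.lt_of_succ_lt h2)⟩ ∧
      w = y * Equiv.swap ⟨j, Nat.lt_of_succ_lt (Nat.lt_of_succ_lt h2)⟩
            ⟨j + 1, Nat.lt_of_succ_lt h2⟩)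

/-- `y0` is the minimal-length representative of the right coset `y⟨sᵢ, sⱼ⟩`. -/
def IsMinRep (n i j : ℕ) (y0 y : Equiv.Perm (Fin n)) : Prop :=
  (∃ u ∈ Subgroup.closure ({s n i, s n j} : Set (Equiv.Perm (Fin n))), y = y0 * u) ∧
  ∀ u ∈ Subgroup.closure ({s n i, s n j} : Set (Equiv.Perm (Fin n))),
    len n y0 ≤ len n (y0 * u)

/-- `Ky = K_{ij}(y)`: with `y⁰` the minimal-length representative of `y⟨sᵢ, sⱼ⟩`, either
`y = y⁰sᵢ` and `Ky = y⁰sᵢsⱼ`, or `y = y⁰sⱼsᵢ` and `Ky = y⁰sⱼ`. -/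
def IsKnuthImage (n i j : ℕ) (y Ky : Equiv.Perm (Fin n)) : Prop :=
  ∃ y0 : Equiv.Perm (Fin n), IsMinRep n i j y0 y ∧
    ((y = y0 * s n i ∧ Ky = y0 * s n i * s n j) ∨
     (y = y0 * s n j * s n i ∧ Ky = y0 * s n j))

/-- `w ∈ D_{ij}`, i.e. `w sᵢ < w < w sⱼ`. -/
def memD (n i j : ℕ) (w : Equiv.Perm (Fin n)) : Prop :=
  bruhatLT n (w * s n i) w ∧ bruhatLT n w (w * s n j)

/-! ### Robinson–Schensted insertion -/

/-- Insert `k` into a row by Schensted bumping: replace the leftmost entry `> k` by `k`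
(returning the bumped entry), or append `k` at the end of the row. -/
def rowInsert (r : List ℕ) (k : ℕ) : List ℕ × Option ℕ :=
  match r.findIdx? (fun x => decide (k < x)) with
  | none => (r ++ [k], none)
  | some j => (r.set j k, some (r.getD j 0))

/-- Schensted row insertion `T ← k` of `k` into a tableau `T` (given by its list of rows). -/
def insertT : List (List ℕ) → ℕ → List (List ℕ)
  | [], k => [[k]]
  | r :: rest, k =>
    match rowInsert r k with
    | (r', none) => r' :: rest
    | (r', some b) => r' :: insertT rest b

/-- The word `w₁ ⋯ w_n` (with values in `{1, …, n}`) of a permutation `w ∈ Sₙ`. -/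
def word (n : ℕ) (w : Equiv.Perm (Fin n)) : List ℕ :=
  (List.finRange n).map (fun i => (w i : ℕ) + 1)

/-- The P-symbol of `w`:  `P(w) = ∅ ← w₁ ← ⋯ ← w_n` (row-insert the word of `w`). -/
def Psymb (n : ℕ) (w : Equiv.Perm (Fin n)) : List (List ℕ) :=
  (word n w).foldl insertT []

/-- The Q-symbol of `w`:  `Q(w) = P(w⁻¹)`. -/
def Qsymb (n : ℕ) (w : Equiv.Perm (Fin n)) : List (List ℕ) :=
  Psymb n w⁻¹

/-- Schensted column insertion `k → T`: row insertion with the roles of rows and columns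
interchanged. -/
def colInsert (T : List (List ℕ)) (k : ℕ) : List (List ℕ) :=
  (insertT T.transpose k).transpose

/-! ### Special tableaux and words attached to a partition (given by column lengths) -/

/-- The word consisting of consecutive decreasing blocks
`l₁, …, 1, l₁+l₂, …, l₁+1, …` determined by the column lengths `l₁, l₂, …`. -/
def blockWord : List ℕ → ℕ → List ℕ
  | [], _ => []
  | l :: rest, offset =>
      ((List.range l).map (fun j => offset + l - j)) ++ blockWord rest (offset + l)

/-- The columns of the tableau `P_π`: the `i`-th column contains
`l₁+⋯+l_{i−1}+1, …, l₁+⋯+l_i` from top to bottom. -/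
def colsOf : List ℕ → ℕ → List (List ℕ)
  | [], _ => []
  | l :: rest, offset =>
      ((List.range l).map (fun j => offset + j + 1)) :: colsOf rest (offset + l)

/-- The standard tableau `P_π` (as a list of rows) attached to a partition `π` with
column lengths `L = [l₁, l₂, …]`. -/
def Ptab (L : List ℕ) : List (List ℕ) :=
  (colsOf L 0).transpose

end KLPaper

/-!
Write `u = w⁻¹`. Since `l(w) = l(w⁻¹)` is the number of inversions, `w < sᵢw` says that `i` is
an ascent of `u`, and `L(w) ⊄ L(sᵢw)` gives a descent `j` of `u` that is no descent of `u sᵢ`.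
This forces `j = i ± 1`, and then the words of `u` and `u sᵢ` differ by one elementary Knuth
transformation on three consecutive letters. Row insertion of such a triple into a weakly
increasing row gives the same row and bumps two words that are again equal or Knuth-related, so
by induction on the rows Knuth transformations do not change the insertion tableau.
-/

namespace KLPaper

section Schensted

variable {r : List ℕ} {a b k : ℕ}

@[simp] lemma rowInsert_nil (k : ℕ) : rowInsert [] k = ([k], none) := rfl

lemma rowInsert_cons_of_lt (h : k < a) (r : List ℕ) :
    rowInsert (a :: r) k = (k :: r, some a) := by
  simp [rowInsert, List.findIdx?_cons, h]

lemma rowInsert_cons_of_le (h : a ≤ k) (r : List ℕ) :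
    rowInsert (a :: r) k = (a :: (rowInsert r k).1, (rowInsert r k).2) := by
  simp only [rowInsert, List.findIdx?_cons, not_lt.2 h, decide_false]
  cases List.findIdx? (fun x => decide (k < x)) r <;> simp

lemma lt_of_rowInsert_eq_some (h : (rowInsert r k).2 = some b) : k < b := by
  induction r with
  | nil => simp at h
  | cons a r ih =>
    rcases lt_or_ge k a with hk | hk
    · simp_all [rowInsert_cons_of_lt hk]
    · exact ih (by simpa [rowInsert_cons_of_le hk] using h)

lemma mem_of_rowInsert_eq_some (h : (rowInsert r k).2 = some b) : b ∈ r := by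
  induction r with
  | nil => simp at h
  | cons a r ih =>
    rcases lt_or_ge k a with hk | hk
    · simp_all [rowInsert_cons_of_lt hk]
    · exact List.mem_cons_of_mem a (ih (by simpa [rowInsert_cons_of_le hk] using h))

lemma le_of_rowInsert_eq_none (h : (rowInsert r k).2 = none) : ∀ e ∈ r, e ≤ k := by
  induction r with
  | nil => simp
  | cons a r ih =>
    rcases lt_or_ge k a with hk | hk
    · simp [rowInsert_cons_of_lt hk] at h
    · simp only [rowInsert_cons_of_le hk] at h
      simpa [hk] using ih h

lemma mem_rowInsert_self (r : List ℕ) (k : ℕ) : k ∈ (rowInsert r k).1 := by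
  induction r with
  | nil => simp
  | cons a r ih =>
    rcases lt_or_ge k a with hk | hk
    · simp [rowInsert_cons_of_lt hk]
    · simp [rowInsert_cons_of_le hk, ih]

lemma mem_or_eq_of_mem_rowInsert {e : ℕ} (he : e ∈ (rowInsert r k).1) : e ∈ r ∨ e = k := by
  induction r with
  | nil => simpa using he
  | cons a r ih =>
    rcases lt_or_ge k a with hk | hk
    · simp only [rowInsert_cons_of_lt hk, List.mem_cons] at he ⊢
      tauto
    · simp only [rowInsert_cons_of_le hk, List.mem_cons] at he ⊢
      rcases he with he | he
      · exact .inl (.inl he)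
      · exact (ih he).imp_left .inr

lemma pairwise_rowInsert (hr : r.Pairwise (· ≤ ·)) (k : ℕ) :
    (rowInsert r k).1.Pairwise (· ≤ ·) := by
  induction r with
  | nil => simp
  | cons a r ih =>
    obtain ⟨ha, hr⟩ := List.pairwise_cons.1 hr
    rcases lt_or_ge k a with hk | hk
    · simpa [rowInsert_cons_of_lt hk] using ⟨fun e he => hk.le.trans (ha e he), hr⟩
    · rw [rowInsert_cons_of_le hk]
      refine List.pairwise_cons.2 ⟨fun e he => ?_, ih hr⟩
      rcases mem_or_eq_of_mem_rowInsert he with he | rfl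
      exacts [ha e he, hk]

lemma le_of_rowInsert_eq_some (hr : r.Pairwise (· ≤ ·)) (h : (rowInsert r k).2 = some b)
    {e : ℕ} (he : e ∈ r) (hke : k < e) : b ≤ e := by
  induction r with
  | nil => simp at he
  | cons a r ih =>
    obtain ⟨ha, hr⟩ := List.pairwise_cons.1 hr
    rcases lt_or_ge k a with hk | hk
    · simp only [rowInsert_cons_of_lt hk, Option.some.injEq] at h
      subst h
      rcases List.mem_cons.1 he with rfl | he
      exacts [le_rfl, ha e he]
    · simp only [rowInsert_cons_of_le hk] at h
      rcases List.mem_cons.1 he with rfl | he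
      exacts [absurd hke (not_lt.2 hk), ih hr h he]

lemma exists_rowInsert_eq_some_le (hr : r.Pairwise (· ≤ ·)) (hk : k ∈ r) {y : ℕ}
    (hyk : y < k) : ∃ c, (rowInsert r y).2 = some c ∧ c ≤ k := by
  induction r with
  | nil => simp at hk
  | cons a r ih =>
    obtain ⟨ha, hr⟩ := List.pairwise_cons.1 hr
    rcases lt_or_ge y a with hya | hya
    · refine ⟨a, by simp [rowInsert_cons_of_lt hya], ?_⟩
      rcases List.mem_cons.1 hk with rfl | hk
      exacts [le_rfl, ha k hk]
    · rw [rowInsert_cons_of_le hya]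
      exact ih hr ((List.mem_cons.1 hk).resolve_left (by omega))

def rowInsertWord : List ℕ → List ℕ → List ℕ × List ℕ
  | r, [] => (r, [])
  | r, k :: ks =>
    ((rowInsertWord (rowInsert r k).1 ks).1,
      (rowInsert r k).2.toList ++ (rowInsertWord (rowInsert r k).1 ks).2)

lemma rowInsertWord_cons_of_le {l : List ℕ} (h : ∀ k ∈ l, a ≤ k) (r : List ℕ) :
    rowInsertWord (a :: r) l = (a :: (rowInsertWord r l).1, (rowInsertWord r l).2) := by
  induction l generalizing r with
  | nil => rfl
  | cons k l ih =>
    simp only [List.forall_mem_cons] at h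
    simp only [rowInsertWord, rowInsert_cons_of_le h.1, ih h.2]

lemma foldl_insertT_cons (r : List ℕ) (rest : List (List ℕ)) (l : List ℕ) :
    l.foldl insertT (r :: rest) =
      (rowInsertWord r l).1 :: (rowInsertWord r l).2.foldl insertT rest := by
  induction l generalizing r rest with
  | nil => rfl
  | cons k l ih =>
    rcases h : rowInsert r k with ⟨r', _ | b⟩ <;> simp [insertT, rowInsertWord, h, ih]

inductive KnuthTriple : List ℕ → List ℕ → Prop
  | xzy {x y z : ℕ} : x ≤ y → y < z → KnuthTriple [x, z, y] [z, x, y]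
  | yxz {x y z : ℕ} : x < y → y ≤ z → KnuthTriple [y, x, z] [y, z, x]

lemma rowInsertWord_xzy {x y z : ℕ} (hxy : x ≤ y) (hyz : y < z) (hr : r.Pairwise (· ≤ ·)) :
    (rowInsertWord r [x, z, y]).1 = (rowInsertWord r [z, x, y]).1 ∧
      Relation.ReflGen (Relation.SymmGen KnuthTriple)
        (rowInsertWord r [x, z, y]).2 (rowInsertWord r [z, x, y]).2 := by
  have hxz : x < z := hxy.trans_lt hyz
  induction r with
  | nil =>
    simp [rowInsertWord, rowInsert_cons_of_le hxy, rowInsert_cons_of_le hxz.le,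
      rowInsert_cons_of_lt hxz, rowInsert_cons_of_lt hyz, Relation.ReflGen.refl]
  | cons a r ih =>
    obtain ⟨ha, hr⟩ := List.pairwise_cons.1 hr
    rcases le_or_gt a x with hax | hxa
    · rw [rowInsertWord_cons_of_le (by simp; omega), rowInsertWord_cons_of_le (by simp; omega)]
      obtain ⟨h₁, h₂⟩ := ih hr
      exact ⟨by rw [h₁], h₂⟩
    rcases lt_or_ge z a with hza | haz
    · rcases r with _ | ⟨b, r⟩
      · simp [rowInsertWord, rowInsert_cons_of_le hxy, rowInsert_cons_of_le hxz.le,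
          rowInsert_cons_of_lt hxz, rowInsert_cons_of_lt hyz, rowInsert_cons_of_lt hxa,
          rowInsert_cons_of_lt hza, Relation.ReflGen.refl]
      · have hab : a ≤ b := ha b (by simp)
        have hzb : z < b := hza.trans_le hab
        have e₁ : rowInsertWord (a :: b :: r) [x, z, y] = (x :: y :: r, [a, b, z]) := by
          simp [rowInsertWord, rowInsert_cons_of_le hxy, rowInsert_cons_of_le hxz.le,
            rowInsert_cons_of_lt hyz, rowInsert_cons_of_lt hxa, rowInsert_cons_of_lt hzb]
        have e₂ : rowInsertWord (a :: b :: r) [z, x, y] = (x :: y :: r, [a, z, b]) := by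
          simp [rowInsertWord, rowInsert_cons_of_le hxy, rowInsert_cons_of_lt hxz,
            rowInsert_cons_of_lt hza, rowInsert_cons_of_lt (hyz.trans hzb)]
        rw [e₁, e₂]
        exact ⟨rfl, .single (.inr (.yxz hza hab))⟩
    · simp only [rowInsertWord, rowInsert_cons_of_lt hxa, rowInsert_cons_of_le haz,
        rowInsert_cons_of_le hxz.le, rowInsert_cons_of_le hxy, true_and]
      rcases hb : (rowInsert r z).2 with _ | b
      · simp [Relation.ReflGen.refl]
      · obtain ⟨c, hc, hcz⟩ :=
          exists_rowInsert_eq_some_le (pairwise_rowInsert hr z) (mem_rowInsert_self r z) hyz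
        have hac : a ≤ c := by
          rcases mem_or_eq_of_mem_rowInsert (mem_of_rowInsert_eq_some hc) with hc | rfl
          exacts [ha c hc, haz]
        simpa [hc] using .single (.inl (.xzy hac (hcz.trans_lt (lt_of_rowInsert_eq_some hb))))

lemma rowInsertWord_yxz {x y z : ℕ} (hxy : x < y) (hyz : y ≤ z) (hr : r.Pairwise (· ≤ ·)) :
    (rowInsertWord r [y, x, z]).1 = (rowInsertWord r [y, z, x]).1 ∧
      Relation.ReflGen (Relation.SymmGen KnuthTriple)
        (rowInsertWord r [y, x, z]).2 (rowInsertWord r [y, z, x]).2 := by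
  have hxz : x < z := hxy.trans_le hyz
  induction r with
  | nil =>
    simp [rowInsertWord, rowInsert_cons_of_le hyz, rowInsert_cons_of_le hxz.le,
      rowInsert_cons_of_lt hxy, Relation.ReflGen.refl]
  | cons a r ih =>
    obtain ⟨ha, hr⟩ := List.pairwise_cons.1 hr
    rcases le_or_gt a x with hax | hxa
    · rw [rowInsertWord_cons_of_le (by simp; omega), rowInsertWord_cons_of_le (by simp; omega)]
      obtain ⟨h₁, h₂⟩ := ih hr
      exact ⟨by rw [h₁], h₂⟩
    rcases lt_or_ge y a with hya | hay
    · simp only [rowInsertWord, rowInsert_cons_of_lt hya, rowInsert_cons_of_lt hxy,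
        rowInsert_cons_of_le hxz.le, rowInsert_cons_of_le hyz, true_and]
      rcases hb : (rowInsert r z).2 with _ | b
      · simp [Relation.ReflGen.refl]
      · simpa using .single (.inl (.yxz hya (ha b (mem_of_rowInsert_eq_some hb))))
    · simp only [rowInsertWord, rowInsert_cons_of_le hay, rowInsert_cons_of_lt hxa,
        rowInsert_cons_of_le hxz.le, rowInsert_cons_of_le (hay.trans hyz), true_and]
      rcases hb₂ : (rowInsert (rowInsert r y).1 z).2 with _ | b₂
      · simp [Relation.ReflGen.refl]
      have hzb₂ := lt_of_rowInsert_eq_some hb₂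
      have hb₂r : b₂ ∈ r :=
        (mem_or_eq_of_mem_rowInsert (mem_of_rowInsert_eq_some hb₂)).resolve_right (by omega)
      rcases hb₁ : (rowInsert r y).2 with _ | b₁
      · exact absurd (le_of_rowInsert_eq_none hb₁ b₂ hb₂r) (by omega)
      have hab₁ : a < b₁ := hay.trans_lt (lt_of_rowInsert_eq_some hb₁)
      have hb₁b₂ : b₁ ≤ b₂ := le_of_rowInsert_eq_some hr hb₁ hb₂r (by omega)
      simpa using .single (.inl (.yxz hab₁ hb₁b₂))

lemma rowInsertWord_of_knuthTriple {l₁ l₂ : List ℕ} (h : KnuthTriple l₁ l₂)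
    (hr : r.Pairwise (· ≤ ·)) :
    (rowInsertWord r l₁).1 = (rowInsertWord r l₂).1 ∧
      Relation.ReflGen (Relation.SymmGen KnuthTriple) (rowInsertWord r l₁).2
        (rowInsertWord r l₂).2 := by
  cases h with
  | xzy hxy hyz => exact rowInsertWord_xzy hxy hyz hr
  | yxz hxy hyz => exact rowInsertWord_yxz hxy hyz hr

lemma pairwise_insertT {T : List (List ℕ)} (hT : ∀ r ∈ T, r.Pairwise (· ≤ ·)) (k : ℕ) :
    ∀ r ∈ insertT T k, r.Pairwise (· ≤ ·) := by
  induction T generalizing k with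
  | nil => simp [insertT]
  | cons r rest ih =>
    simp only [List.forall_mem_cons] at hT
    rcases h : rowInsert r k with ⟨r', _ | b⟩ <;>
      simp only [insertT, h, List.forall_mem_cons] <;>
      refine ⟨by simpa [h] using pairwise_rowInsert hT.1 k, ?_⟩
    exacts [hT.2, ih hT.2 b]

lemma pairwise_foldl_insertT (l : List ℕ) : ∀ r ∈ l.foldl insertT [], r.Pairwise (· ≤ ·) := by
  suffices ∀ T : List (List ℕ), (∀ r ∈ T, r.Pairwise (· ≤ ·)) →
      ∀ r ∈ l.foldl insertT T, r.Pairwise (· ≤ ·) from this [] (by simp)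
  induction l with
  | nil => exact fun T hT => hT
  | cons k l ih => exact fun T hT => ih _ (pairwise_insertT hT k)

lemma foldl_insertT_eq_of_knuthTriple {T : List (List ℕ)} (hT : ∀ r ∈ T, r.Pairwise (· ≤ ·))
    {l₁ l₂ : List ℕ} (h : KnuthTriple l₁ l₂) : l₁.foldl insertT T = l₂.foldl insertT T := by
  induction T generalizing l₁ l₂ with
  | nil =>
    cases h with
    | xzy hxy hyz =>
      simp [insertT, rowInsert_cons_of_le hxy, rowInsert_cons_of_le (hxy.trans hyz.le),
        rowInsert_cons_of_lt (hxy.trans_lt hyz), rowInsert_cons_of_lt hyz]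
    | yxz hxy hyz =>
      simp [insertT, rowInsert_cons_of_le hyz, rowInsert_cons_of_le (hxy.trans_le hyz).le,
        rowInsert_cons_of_lt hxy]
  | cons r rest ih =>
    simp only [List.forall_mem_cons] at hT
    obtain ⟨hrow, hbump⟩ := rowInsertWord_of_knuthTriple h hT.1
    rw [foldl_insertT_cons, foldl_insertT_cons, hrow]
    rcases (Relation.reflGen_iff _ _ _).1 hbump with hb | hb | hb
    · rw [hb]
    · rw [ih hT.2 hb]
    · rw [ih hT.2 hb]

theorem foldl_insertT_append_knuthTriple (A B : List ℕ) {l₁ l₂ : List ℕ}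
    (h : KnuthTriple l₁ l₂) :
    (A ++ l₁ ++ B).foldl insertT [] = (A ++ l₂ ++ B).foldl insertT [] := by
  simp only [List.foldl_append, foldl_insertT_eq_of_knuthTriple (pairwise_foldl_insertT A) h]

end Schensted

section Length

open Finset

variable {n i : ℕ}

lemma s_of_lt (hi : i + 1 < n) : s n i = Equiv.swap ⟨i, by omega⟩ ⟨i + 1, hi⟩ := dif_pos hi

lemma s_mul_self (hi : i + 1 < n) : s n i * s n i = 1 := by
  simp [s_of_lt hi]

lemma s_inv (hi : i + 1 < n) : (s n i)⁻¹ = s n i := by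
  simp [s_of_lt hi]

lemma s_apply_s_apply (hi : i + 1 < n) (c : Fin n) : s n i (s n i c) = c := by
  simp [s_of_lt hi]

lemma s_apply_lt_s_apply_iff (hi : i + 1 < n) {c d : Fin n} :
    s n i c < s n i d ↔ c < d ∧ ¬(c.val = i ∧ d.val = i + 1) ∨ c.val = i + 1 ∧ d.val = i := by
  rw [s_of_lt hi, Equiv.swap_apply_def, Equiv.swap_apply_def]
  split_ifs <;> simp only [Fin.ext_iff, ← Fin.val_fin_lt] at * <;> omega

def inversions (w : Equiv.Perm (Fin n)) : Finset (Fin n × Fin n) :=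
  {p | p.1 < p.2 ∧ w p.2 < w p.1}

lemma inversions_one : inversions (1 : Equiv.Perm (Fin n)) = ∅ := by
  ext p
  simp only [inversions, mem_filter, mem_univ, true_and, notMem_empty, iff_false]
  exact fun h => lt_asymm h.1 h.2

lemma card_inversions_inv (w : Equiv.Perm (Fin n)) : #(inversions w⁻¹) = #(inversions w) := by
  refine card_bij' (fun p _ => (w⁻¹ p.2, w⁻¹ p.1)) (fun p _ => (w p.2, w p.1)) ?_ ?_ ?_ ?_ <;>
    simp +contextual [inversions]

lemma card_inversions_mul_s_of_lt (hi : i + 1 < n) {w : Equiv.Perm (Fin n)}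
    (h : w ⟨i, by omega⟩ < w ⟨i + 1, hi⟩) :
    #(inversions (w * s n i)) = #(inversions w) + 1 := by
  have key : (inversions (w * s n i)).map (Equiv.prodCongr (s n i) (s n i)).toEmbedding =
      insert (⟨i + 1, hi⟩, ⟨i, by omega⟩) (inversions w) := by
    ext ⟨⟨c, hc⟩, ⟨d, hd⟩⟩
    have hs : (s n i).symm = s n i := s_inv hi
    simp only [inversions, mem_map_equiv, mem_filter, mem_univ, true_and, mem_insert,
      Prod.mk.injEq, Equiv.prodCongr_symm, hs, Equiv.prodCongr_apply, Prod.map]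
    simp only [Equiv.Perm.mul_apply, s_apply_s_apply hi, s_apply_lt_s_apply_iff hi]
    by_cases h₁ : c = i ∧ d = i + 1
    · obtain ⟨rfl, rfl⟩ := h₁
      simp [h.not_gt]
    by_cases h₂ : c = i + 1 ∧ d = i
    · obtain ⟨rfl, rfl⟩ := h₂
      simp [h]
    simp [h₁, h₂, Fin.ext_iff]
  rw [← card_map, key, card_insert_of_notMem (by simp [inversions])]

lemma card_inversions_mul_s_of_gt (hi : i + 1 < n) {w : Equiv.Perm (Fin n)}
    (h : w ⟨i + 1, hi⟩ < w ⟨i, by omega⟩) :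
    #(inversions (w * s n i)) + 1 = #(inversions w) := by
  have h' : (w * s n i) ⟨i, by omega⟩ < (w * s n i) ⟨i + 1, hi⟩ := by
    simpa [s_of_lt hi] using h
  simpa [mul_assoc, s_mul_self hi] using (card_inversions_mul_s_of_lt hi h').symm

lemma card_inversions_mul_s_le (hi : i + 1 < n) (w : Equiv.Perm (Fin n)) :
    #(inversions (w * s n i)) ≤ #(inversions w) + 1 := by
  rcases lt_or_gt_of_ne (w.injective.ne (show (⟨i, by omega⟩ : Fin n) ≠ ⟨i + 1, hi⟩ by simp))
    with h | h
  · exact (card_inversions_mul_s_of_lt hi h).le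
  · have := card_inversions_mul_s_of_gt hi h
    omega

lemma exists_descent {w : Equiv.Perm (Fin n)} (hw : w ≠ 1) :
    ∃ i, ∃ hi : i + 1 < n, w ⟨i + 1, hi⟩ < w ⟨i, by omega⟩ := by
  by_contra! hasc
  apply hw
  have hmono : StrictMono w := by
    obtain _ | n := n
    · exact fun a => a.elim0
    rw [Fin.strictMono_iff_lt_succ]
    intro a
    refine (hasc a (by omega)).lt_of_ne (w.injective.ne ?_)
    simp [Fin.ext_iff]
  have : hmono.orderIsoOfSurjective w w.surjective = OrderIso.refl _ := Subsingleton.elim _ _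
  ext a
  exact congrArg Fin.val (DFunLike.congr_fun this a)

lemma exists_word_length_eq_card_inversions (w : Equiv.Perm (Fin n)) :
    ∃ l : List ℕ, (∀ i ∈ l, i + 1 < n) ∧ l.length = #(inversions w) ∧ (l.map (s n)).prod = w := by
  induction h : #(inversions w) using Nat.strong_induction_on generalizing w with
  | _ m ih =>
    rcases eq_or_ne w 1 with rfl | hw
    · exact ⟨[], by simp, by simp [← h, inversions_one], by simp⟩
    obtain ⟨i, hi, hdesc⟩ := exists_descent hw
    have hcard := card_inversions_mul_s_of_gt hi hdesc
    obtain ⟨l, hl, hlen, hprod⟩ := ih _ (by omega) (w * s n i) rfl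
    refine ⟨l ++ [i], ?_, by simp; omega, by simp [hprod, mul_assoc, s_mul_self hi]⟩
    simpa [or_imp, forall_and] using ⟨hl, hi⟩

lemma card_inversions_prod_le_length {l : List ℕ} (hl : ∀ i ∈ l, i + 1 < n) :
    #(inversions (l.map (s n)).prod) ≤ l.length := by
  induction l using List.reverseRecOn with
  | nil => simp [inversions_one]
  | append_singleton l i ih =>
    simp only [List.mem_append, List.mem_singleton] at hl
    simpa using (card_inversions_mul_s_le (hl i (.inr rfl)) _).trans
      (Nat.succ_le_succ (ih fun j hj => hl j (.inl hj)))

lemma len_eq_card_inversions (w : Equiv.Perm (Fin n)) : len n w = #(inversions w) := by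
  obtain ⟨l, hl, hlen, hprod⟩ := exists_word_length_eq_card_inversions w
  refine le_antisymm (Nat.sInf_le ⟨l, hl, hlen, hprod⟩) (le_csInf ⟨_, l, hl, hlen, hprod⟩ ?_)
  rintro _ ⟨l', hl', rfl, rfl⟩
  exact card_inversions_prod_le_length hl'

lemma len_inv (w : Equiv.Perm (Fin n)) : len n w⁻¹ = len n w := by
  rw [len_eq_card_inversions, len_eq_card_inversions, card_inversions_inv]

lemma len_mul_s_lt_iff (hi : i + 1 < n) (w : Equiv.Perm (Fin n)) :
    len n (w * s n i) < len n w ↔ w ⟨i + 1, hi⟩ < w ⟨i, by omega⟩ := by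
  rw [len_eq_card_inversions, len_eq_card_inversions]
  rcases lt_or_gt_of_ne (w.injective.ne (show (⟨i, by omega⟩ : Fin n) ≠ ⟨i + 1, hi⟩ by simp))
    with h | h
  · simp [card_inversions_mul_s_of_lt hi h, h.not_gt]
  · simp only [h, iff_true]
    have := card_inversions_mul_s_of_gt hi h
    omega

lemma len_s_mul_lt_iff (hi : i + 1 < n) (w : Equiv.Perm (Fin n)) :
    len n (s n i * w) < len n w ↔ w⁻¹ ⟨i + 1, hi⟩ < w⁻¹ ⟨i, by omega⟩ := by
  rw [← len_inv, ← len_inv w, mul_inv_rev, s_inv hi, len_mul_s_lt_iff hi]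

lemma len_lt_of_bruhatLT {y w : Equiv.Perm (Fin n)} (h : bruhatLT n y w) :
    len n y < len n w := by
  have hy := (Relation.reflTransGen_iff_eq_or_transGen.1 h.1).resolve_left h.2.symm
  simpa [Relation.transGen_eq_self, Function.onFun] using
    Relation.TransGen.lift (p := (· < · : ℕ → ℕ → Prop)) (len n) (fun _ _ hab => hab.2) _ _ hy

end Length

section Words

variable {n : ℕ}

lemma length_word (u : Equiv.Perm (Fin n)) : (word n u).length = n := by
  simp [word]

lemma getElem_word (u : Equiv.Perm (Fin n)) {k : ℕ} (hk : k < (word n u).length) :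
    (word n u)[k] = (u ⟨k, by simpa [length_word] using hk⟩ : ℕ) + 1 := by
  simp [word]

lemma word_eq_take_append_drop (u : Equiv.Perm (Fin n)) {j : ℕ} (hj : j + 2 < n) :
    word n u = (word n u).take j ++
      [(u ⟨j, by omega⟩ : ℕ) + 1, (u ⟨j + 1, by omega⟩ : ℕ) + 1, (u ⟨j + 2, hj⟩ : ℕ) + 1] ++
      (word n u).drop (j + 3) := by
  have hlen := length_word u
  conv_lhs => rw [← List.take_append_drop j (word n u)]
  rw [List.append_assoc, List.drop_eq_getElem_cons (by omega),
    List.drop_eq_getElem_cons (by omega), List.drop_eq_getElem_cons (by omega)]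
  simp [getElem_word]

lemma take_word_eq_take_word {u v : Equiv.Perm (Fin n)} {m : ℕ}
    (h : ∀ k : Fin n, k.val < m → u k = v k) : (word n u).take m = (word n v).take m := by
  refine List.ext_getElem (by simp [length_word]) fun k h₁ h₂ => ?_
  simp only [List.getElem_take, getElem_word]
  rw [h ⟨k, _⟩ (by simp [length_word] at h₁; simp; omega)]

lemma drop_word_eq_drop_word {u v : Equiv.Perm (Fin n)} {m : ℕ}
    (h : ∀ k : Fin n, m ≤ k.val → u k = v k) : (word n u).drop m = (word n v).drop m := by
  refine List.ext_getElem (by simp [length_word]) fun k h₁ h₂ => ?_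
  simp only [List.getElem_drop, getElem_word]
  rw [h _ (by simp)]

lemma word_mul_swap (y : Equiv.Perm (Fin n)) {j : ℕ} (hj : j + 2 < n) {a b : Fin n}
    (ha : j ≤ a.val ∧ a.val < j + 3) (hb : j ≤ b.val ∧ b.val < j + 3) :
    word n (y * Equiv.swap a b) = (word n y).take j ++
      [((y * Equiv.swap a b) ⟨j, by omega⟩ : ℕ) + 1,
        ((y * Equiv.swap a b) ⟨j + 1, by omega⟩ : ℕ) + 1,
        ((y * Equiv.swap a b) ⟨j + 2, hj⟩ : ℕ) + 1] ++ (word n y).drop (j + 3) := by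
  have hfix : ∀ k : Fin n, (k.val < j ∨ j + 3 ≤ k.val) → (y * Equiv.swap a b) k = y k := by
    intro k hk
    rw [Equiv.Perm.mul_apply, Equiv.swap_apply_of_ne_of_ne] <;>
      · rw [Ne, Fin.ext_iff]; omega
  rw [word_eq_take_append_drop _ hj, take_word_eq_take_word fun k hk => hfix k (.inl hk),
    drop_word_eq_drop_word fun k hk => hfix k (.inr hk)]

theorem Psymb_eq_of_knuthStep {y w : Equiv.Perm (Fin n)} (h : KnuthStep n y w) :
    Psymb n y = Psymb n w := by
  obtain ⟨j, hj, ⟨h₁, h₂, rfl⟩ | ⟨h₁, h₂, rfl⟩⟩ := h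
  · rw [Psymb, Psymb, word_eq_take_append_drop y hj, word_mul_swap y hj (by simp) (by simp)]
    simpa [Equiv.swap_apply_def, Fin.ext_iff] using
      foldl_insertT_append_knuthTriple _ _ (.yxz (Nat.succ_lt_succ h₁) (Nat.succ_le_succ h₂.le))
  · rw [Psymb, Psymb, word_eq_take_append_drop y hj, word_mul_swap y hj (by simp) (by simp)]
    simpa [Equiv.swap_apply_def, Fin.ext_iff] using (foldl_insertT_append_knuthTriple _ _
      (.xzy (Nat.succ_le_succ h₁.le) (Nat.succ_lt_succ h₂))).symm

lemma knuthStep_mul_s {u : Equiv.Perm (Fin n)} {i j : ℕ} (hi : i + 1 < n) (hj : j + 1 < n)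
    (hasc : u ⟨i, by omega⟩ < u ⟨i + 1, hi⟩) (hdes : u ⟨j + 1, hj⟩ < u ⟨j, by omega⟩)
    (hasc' : (u * s n i) ⟨j, by omega⟩ ≤ (u * s n i) ⟨j + 1, hj⟩) :
    KnuthStep n u (u * s n i) ∨ KnuthStep n (u * s n i) u := by
  rw [s_of_lt hi] at hasc' ⊢
  by_cases hl : j + 1 = i
  · subst hl
    have hasc' : u ⟨j, by omega⟩ ≤ u ⟨j + 2, hi⟩ := by
      simpa [Equiv.swap_apply_def, Fin.ext_iff, add_assoc] using hasc'
    exact .inl ⟨j, hi, .inl ⟨hdes, hasc'.lt_of_ne (u.injective.ne (by simp)), rfl⟩⟩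
  by_cases hr : j = i + 1
  · subst hr
    have hasc' : u ⟨i, by omega⟩ ≤ u ⟨i + 2, hj⟩ := by
      simpa [Equiv.swap_apply_def, Fin.ext_iff, add_assoc] using hasc'
    refine .inr ⟨i, hj, .inr ⟨?_, ?_, ?_⟩⟩
    · simpa [Equiv.swap_apply_def, Fin.ext_iff] using hasc'.lt_of_ne (u.injective.ne (by simp))
    · simpa [Equiv.swap_apply_def, Fin.ext_iff] using hdes
    · rw [mul_assoc, Equiv.swap_mul_self, mul_one]
  rcases eq_or_ne j i with rfl | hne
  · exact absurd hasc hdes.not_gt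
  · simp [Equiv.swap_apply_def, Fin.ext_iff, hl, hr, hne] at hasc'
    exact absurd hasc' hdes.not_ge

end Words

end KLPaper

/-- If `w ∈ Sₙ` satisfies `w < sᵢw` and `L(w) ⊄ L(sᵢw)`, then `w⁻¹` and `w⁻¹sᵢ` have the
same P-symbol: `P(w⁻¹) = P(w⁻¹sᵢ)`. -/
theorem KLPaper.Psymb_inv_eq (n : ℕ) (i : ℕ) (hi : i + 1 < n) (w : Equiv.Perm (Fin n))
    (h1 : KLPaper.bruhatLT n w (KLPaper.s n i * w))
    (h2 : ¬ KLPaper.LD n w ⊆ KLPaper.LD n (KLPaper.s n i * w)) :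
    KLPaper.Psymb n w⁻¹ = KLPaper.Psymb n (w⁻¹ * KLPaper.s n i) := by
  have hinv : (s n i * w)⁻¹ = w⁻¹ * s n i := by rw [mul_inv_rev, s_inv hi]
  have hasc : w⁻¹ ⟨i, by omega⟩ < w⁻¹ ⟨i + 1, hi⟩ := by
    have hdes := (len_s_mul_lt_iff hi (s n i * w)).1
      (by rw [← mul_assoc, s_mul_self hi, one_mul]; exact len_lt_of_bruhatLT h1)
    simpa [hinv, s_of_lt hi] using hdes
  obtain ⟨j, ⟨hj, hdes⟩, hj'⟩ := Set.not_subset.1 h2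
  have hasc' : (w⁻¹ * s n i) ⟨j, by omega⟩ ≤ (w⁻¹ * s n i) ⟨j + 1, hj⟩ := by
    rw [← hinv, ← not_lt, ← len_s_mul_lt_iff hj]
    exact fun h => hj' ⟨hj, h⟩
  rcases knuthStep_mul_s hi hj hasc ((len_s_mul_lt_iff hj w).1 hdes) hasc' with h | h
  exacts [Psymb_eq_of_knuthStep h, (Psymb_eq_of_knuthStep h).symm]
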